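/- Let $(\psi_k) \subseteq X_1^*$ be a $p$-Bessel sequence for $X_1$ with bound $B_1$, $(\phi_k) \subseteq X_2$ a $q$-Bessel sequence for $X_2^*$ with bound $B_2$, and $m \in \mathbf{c}_0$. Then the multiplier $\mathbf{M}_{m,(\phi_k),(\psi_k)} : X_1 \to X_2$ is a compact operator. -/

import Mathlib

/-!
The truncations `T_N = ∑_{k<N} m_k ψ_k(·) φ_k` have finite rank, and `M - T_N` is the multiplier
with symbol `m` cut off below `N`. Pairing with `h ∈ X₂*` and applying Hölder's inequality to
`(ψ_k f)` and `(h φ_k)` gives `‖M - T_N‖ ≤ B₁ B₂ sup_{k ≥ N} |m_k|`, which tends to `0` since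
`m ∈ c₀`; so `M` is a norm limit of compact operators.
-/

open Filter

def IsBesselSeq {E : Type*} [SeminormedAddCommGroup E] (p B : ℝ) (g : ℕ → E → ℝ) : Prop :=
  ∀ x : E, ∃ s : ℝ, HasSum (fun k => |g k x| ^ p) s ∧ s ^ (1 / p) ≤ B * ‖x‖

theorem IsBesselSeq.summable_and_tsum_mul_le {E F : Type*} [SeminormedAddCommGroup E]
    [SeminormedAddCommGroup F] {p q B₁ B₂ : ℝ} {g₁ : ℕ → E → ℝ} {g₂ : ℕ → F → ℝ}
    (hpq : p.HolderConjugate q) (hg₁ : IsBesselSeq p B₁ g₁) (hg₂ : IsBesselSeq q B₂ g₂)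
    (x : E) (y : F) :
    Summable (fun k => |g₁ k x| * |g₂ k y|) ∧
      ∑' k, |g₁ k x| * |g₂ k y| ≤ B₁ * B₂ * (‖x‖ * ‖y‖) := by
  obtain ⟨s₁, hs₁, hs₁B⟩ := hg₁ x
  obtain ⟨s₂, hs₂, hs₂B⟩ := hg₂ y
  obtain ⟨hsum, hle⟩ := Real.summable_and_inner_le_Lp_mul_Lq_tsum_of_nonneg hpq
    (fun k => abs_nonneg _) (fun k => abs_nonneg _) hs₁.summable hs₂.summable
  rw [hs₁.tsum_eq, hs₂.tsum_eq] at hle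
  have hs₁_nonneg : 0 ≤ s₁ ^ (1 / p) := Real.rpow_nonneg (hs₁.nonneg fun k => by positivity) _
  have hs₂_nonneg : 0 ≤ s₂ ^ (1 / q) := Real.rpow_nonneg (hs₂.nonneg fun k => by positivity) _
  refine ⟨hsum, hle.trans ?_⟩
  calc s₁ ^ (1 / p) * s₂ ^ (1 / q) ≤ B₁ * ‖x‖ * (B₂ * ‖y‖) :=
        mul_le_mul hs₁B hs₂B hs₂_nonneg (hs₁_nonneg.trans hs₁B)
    _ = B₁ * B₂ * (‖x‖ * ‖y‖) := by ring

section Multiplier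

variable {X₁ X₂ : Type*} [NormedAddCommGroup X₁] [NormedSpace ℝ X₁]
  [NormedAddCommGroup X₂] [NormedSpace ℝ X₂] {ψ : ℕ → StrongDual ℝ X₁} {φ : ℕ → X₂}

theorem isCompactOperator_smulRight (ψ : StrongDual ℝ X₁) (φ : X₂) :
    IsCompactOperator (ψ.smulRight φ) :=
  (isCompactOperator_of_locallyCompactSpace_dom ψ).continuous_comp
    (continuous_id.smul continuous_const)

noncomputable def truncatedMultiplier (m : ℕ → ℝ) (φ : ℕ → X₂) (ψ : ℕ → StrongDual ℝ X₁)
    (N : ℕ) : X₁ →L[ℝ] X₂ :=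
  ∑ k ∈ Finset.range N, m k • (ψ k).smulRight (φ k)

theorem truncatedMultiplier_apply (m : ℕ → ℝ) (N : ℕ) (f : X₁) :
    truncatedMultiplier m φ ψ N f = ∑ k ∈ Finset.range N, (m k * ψ k f) • φ k := by
  simp [truncatedMultiplier, mul_smul]

theorem isCompactOperator_truncatedMultiplier (m : ℕ → ℝ) (N : ℕ) :
    IsCompactOperator (truncatedMultiplier m φ ψ N) :=
  Submodule.sum_mem (compactOperator (RingHom.id ℝ) X₁ X₂) fun k _ =>
    Submodule.smul_mem _ _ (isCompactOperator_smulRight (ψ k) (φ k))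

theorem hasSum_sub_truncatedMultiplier {m : ℕ → ℝ} {M : X₁ →L[ℝ] X₂}
    (hM : ∀ f, HasSum (fun k => (m k * ψ k f) • φ k) (M f)) (N : ℕ) (f : X₁) :
    HasSum (fun k => ((if N ≤ k then m k else 0) * ψ k f) • φ k)
      ((M - truncatedMultiplier m φ ψ N) f) := by
  have hhead : HasSum (fun k => if k < N then (m k * ψ k f) • φ k else 0)
      (truncatedMultiplier m φ ψ N f) := by
    have h : HasSum _ _ := hasSum_sum_of_ne_finset_zero (s := Finset.range N)
      (f := fun k => if k < N then (m k * ψ k f) • φ k else 0) fun k hk => by simp_all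
    rwa [Finset.sum_ite_of_true fun k hk => Finset.mem_range.1 hk,
      ← truncatedMultiplier_apply] at h
  have hsplit : (fun k => ((if N ≤ k then m k else 0) * ψ k f) • φ k) =
      fun k => (m k * ψ k f) • φ k - if k < N then (m k * ψ k f) • φ k else 0 := by
    ext k
    split_ifs <;> first | omega | simp
  rw [hsplit, sub_apply]
  exact (hM f).sub hhead

theorem norm_le_of_hasSum_multiplier {m : ℕ → ℝ} {δ C : ℝ} (hC : 0 ≤ C)
    (hm : ∀ k, |m k| ≤ δ)
    (hpair : ∀ (f : X₁) (h : StrongDual ℝ X₂), Summable (fun k => |ψ k f| * |h (φ k)|) ∧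
      ∑' k, |ψ k f| * |h (φ k)| ≤ C * (‖f‖ * ‖h‖))
    {A : X₁ →L[ℝ] X₂} (hA : ∀ f, HasSum (fun k => (m k * ψ k f) • φ k) (A f)) :
    ‖A‖ ≤ δ * C := by
  have hδ : 0 ≤ δ := (abs_nonneg _).trans (hm 0)
  refine A.opNorm_le_bound (mul_nonneg hδ hC) fun f =>
    NormedSpace.norm_le_dual_bound ℝ _ (by positivity) fun h => ?_
  obtain ⟨hsum, hle⟩ := hpair f h
  have hhA : HasSum (fun k => m k * ψ k f * h (φ k)) (h (A f)) := by
    simpa [smul_eq_mul] using (hA f).mapL h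
  have hterm : ∀ k, ‖m k * ψ k f * h (φ k)‖ ≤ δ * (|ψ k f| * |h (φ k)|) := fun k => by
    rw [Real.norm_eq_abs, abs_mul, abs_mul, mul_assoc]
    exact mul_le_mul_of_nonneg_right (hm k) (by positivity)
  calc ‖h (A f)‖ ≤ δ * ∑' k, |ψ k f| * |h (φ k)| :=
        hhA.norm_le_of_bounded (hsum.hasSum.mul_left δ) hterm
    _ ≤ δ * (C * (‖f‖ * ‖h‖)) := mul_le_mul_of_nonneg_left hle hδ
    _ = δ * C * ‖f‖ * ‖h‖ := by ring

end Multiplier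

theorem multiplier_compact_general {X₁ X₂ : Type*}
    [NormedAddCommGroup X₁] [NormedSpace ℝ X₁]
    [NormedAddCommGroup X₂] [NormedSpace ℝ X₂] [CompleteSpace X₂]
    (p q B₁ B₂ : ℝ) (hp : 1 < p) (hpq : 1 / p + 1 / q = 1) (hB₁ : 0 < B₁) (hB₂ : 0 < B₂)
    (ψ : ℕ → StrongDual ℝ X₁) (φ : ℕ → X₂) (m : ℕ → ℝ)
    (hbesselψ : ∀ f : X₁, ∃ s : ℝ,
      HasSum (fun k => |ψ k f| ^ p) s ∧ s ^ (1 / p) ≤ B₁ * ‖f‖)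
    (hbesselφ : ∀ h : StrongDual ℝ X₂, ∃ s : ℝ,
      HasSum (fun k => |h (φ k)| ^ q) s ∧ s ^ (1 / q) ≤ B₂ * ‖h‖)
    (hm : Tendsto m atTop (nhds 0))
    (M : X₁ →L[ℝ] X₂)
    (hM : ∀ f : X₁, HasSum (fun k => (m k * ψ k f) • φ k) (M f)) :
    IsCompactOperator (⇑M) := by
  have hpq' : p.HolderConjugate q :=
    Real.holderConjugate_iff.mpr ⟨hp, by simpa only [one_div] using hpq⟩
  have hpair := IsBesselSeq.summable_and_tsum_mul_le (g₁ := fun k => ψ k)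
    (g₂ := fun k (h : StrongDual ℝ X₂) => h (φ k)) hpq' hbesselψ hbesselφ
  have hB : 0 < B₁ * B₂ := mul_pos hB₁ hB₂
  refine isCompactOperator_of_tendsto (l := atTop) ?_
    (Eventually.of_forall (isCompactOperator_truncatedMultiplier (ψ := ψ) (φ := φ) m))
  refine Metric.nhds_basis_closedBall.tendsto_right_iff.2 fun ε hε => ?_
  obtain ⟨N, hN⟩ := eventually_atTop.1
    (Metric.nhds_basis_closedBall.tendsto_right_iff.1 hm (ε / (B₁ * B₂)) (by positivity))
  refine eventually_atTop.2 ⟨N, fun n hn => ?_⟩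
  have htail : ∀ k, |if n ≤ k then m k else 0| ≤ ε / (B₁ * B₂) := fun k => by
    split_ifs with hk
    · simpa [Real.dist_eq] using hN k (hn.trans hk)
    · simpa using (div_pos hε hB).le
  rw [Metric.mem_closedBall, dist_comm, dist_eq_norm]
  calc ‖M - truncatedMultiplier m φ ψ n‖ ≤ ε / (B₁ * B₂) * (B₁ * B₂) :=
        norm_le_of_hasSum_multiplier hB.le htail hpair
          (hasSum_sub_truncatedMultiplier hM n)
    _ = ε := div_mul_cancel₀ _ hB.ne'

/-- If `(ψ k)` is a `p`-Bessel sequence for `X₁` with bound `B₁`, `(φ k)` a `q`-Bessel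
sequence for `X₂*` with bound `B₂` and `m ∈ c₀`, then the multiplier
`M_{m,(φ k),(ψ k)} : X₁ → X₂` is a compact operator. -/
theorem multiplier_compact {X₁ X₂ : Type*}
    [NormedAddCommGroup X₁] [NormedSpace ℝ X₁] [CompleteSpace X₁]
    [TopologicalSpace.SeparableSpace X₁]
    [NormedAddCommGroup X₂] [NormedSpace ℝ X₂] [CompleteSpace X₂]
    [TopologicalSpace.SeparableSpace X₂]
    (hrefl₁ : Function.Surjective (NormedSpace.inclusionInDoubleDual ℝ X₁))
    (hrefl₂ : Function.Surjective (NormedSpace.inclusionInDoubleDual ℝ X₂))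
    (p q B₁ B₂ : ℝ) (hp : 1 < p) (hpq : 1 / p + 1 / q = 1) (hB₁ : 0 < B₁) (hB₂ : 0 < B₂)
    (ψ : ℕ → StrongDual ℝ X₁) (φ : ℕ → X₂) (m : ℕ → ℝ)
    (hbesselψ : ∀ f : X₁, ∃ s : ℝ,
      HasSum (fun k => |ψ k f| ^ p) s ∧ s ^ (1 / p) ≤ B₁ * ‖f‖)
    (hbesselφ : ∀ h : StrongDual ℝ X₂, ∃ s : ℝ,
      HasSum (fun k => |h (φ k)| ^ q) s ∧ s ^ (1 / q) ≤ B₂ * ‖h‖)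
    (hm : Tendsto m atTop (nhds 0))
    (M : X₁ →L[ℝ] X₂)
    (hM : ∀ f : X₁, HasSum (fun k => (m k * ψ k f) • φ k) (M f)) :
    IsCompactOperator (⇑M) :=
  multiplier_compact_general p q B₁ B₂ hp hpq hB₁ hB₂ ψ φ m hbesselψ hbesselφ hm M hM
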